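/- Let a, b, c, d > 0 and define G_B : ℝ² → ℝ² by G_B(u) = |u|^{-1} ((a u₁² + b u₂²) u₁, (c u₁² + d u₂²) u₂) for u ≠ 0 and G_B(0) = 0. If max{a+c, b+d} ≤ 2(b + c + 2√(ad)) and 2(b + c - 2√(ad)) ≤ min{a+c, b+d}, then G_B is monotone. -/

import Mathlib

open Classical

/-- `G_B(u) = |u|⁻¹ ((a u₁² + b u₂²) u₁, (c u₁² + d u₂²) u₂)`, with `G_B(0) = 0`. -/
noncomputable def GB2 (a b c d : ℝ) (u : EuclideanSpace ℝ (Fin 2)) :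
    EuclideanSpace ℝ (Fin 2) :=
  if u = 0 then 0 else
    ‖u‖⁻¹ • (WithLp.toLp 2 ![(a * (u 0) ^ 2 + b * (u 1) ^ 2) * u 0,
               (c * (u 0) ^ 2 + d * (u 1) ^ 2) * u 1] : EuclideanSpace ℝ (Fin 2))

/-!
Write `G_B u = ‖u‖⁻¹ • F u` with `F` cubic. Monotonicity says that `t ↦ ⟪G_B (v + t • w), w⟫` is
nondecreasing. On a line avoiding the origin, its derivative at `p = v + t • w` has the sign of
`⟪DF(p) w, w⟫ ‖p‖² - ⟪F p, w⟫ ⟪p, w⟫`, a binary quadratic form in `w` whose discriminant is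
nonpositive as soon as `(2b + c - a)²` and `(b + 2c - d)²` are at most `16ad`; this is what the
max/min condition says. On a line through the origin, homogeneity `G_B (s • w) = (s |s|) • G_B w`
reduces everything to `⟪G_B w, w⟫ ≥ 0`.
-/

open scoped RealInnerProductSpace

theorem quadratic_nonneg_of_sq_le {P W Q : ℝ} (hP : 0 ≤ P) (hQ : 0 ≤ Q)
    (h : W ^ 2 ≤ 4 * P * Q) (X Y : ℝ) : 0 ≤ P * X ^ 2 + W * X * Y + Q * Y ^ 2 := by
  rcases hP.eq_or_lt with rfl | hP
  · obtain rfl : W = 0 := by nlinarith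
    simp only [zero_mul, add_zero, zero_add]
    positivity
  · have h₄ : 0 ≤ 4 * P * (P * X ^ 2 + W * X * Y + Q * Y ^ 2) := by
      have hdisc := sub_nonneg.2 h
      calc (0 : ℝ) ≤ (2 * P * X + W * Y) ^ 2 + (4 * P * Q - W ^ 2) * Y ^ 2 := by positivity
        _ = _ := by ring
    exact (mul_nonneg_iff_of_pos_left (by positivity)).1 h₄

theorem monotone_mul_abs {α : Type*} [Field α] [LinearOrder α] [IsStrictOrderedRing α] :
    Monotone fun x : α => x * |x| := by
  intro x y hxy
  rcases abs_cases x with ⟨hx, hx₀⟩ | ⟨hx, hx₀⟩ <;>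
    rcases abs_cases y with ⟨hy, hy₀⟩ | ⟨hy, hy₀⟩ <;>
    simp only [hx, hy] <;> nlinarith

theorem monotone_div_sqrt_of_deriv {N q N' q' : ℝ → ℝ} (hN : ∀ t, HasDerivAt N (N' t) t)
    (hq : ∀ t, HasDerivAt q (q' t) t) (hpos : ∀ t, 0 < q t)
    (h : ∀ t, N t * q' t ≤ 2 * N' t * q t) : Monotone fun t => N t / √(q t) := by
  have hderiv : ∀ t, HasDerivAt (fun t => N t / √(q t))
      ((N' t * √(q t) - N t * (q' t / (2 * √(q t)))) / √(q t) ^ 2) t := fun t =>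
    (hN t).div ((hq t).sqrt (hpos t).ne') (Real.sqrt_pos.2 (hpos t)).ne'
  refine monotone_of_deriv_nonneg (fun t => (hderiv t).differentiableAt) fun t => ?_
  rw [(hderiv t).deriv]
  have hnum : N' t * √(q t) - N t * (q' t / (2 * √(q t))) =
      (2 * N' t * q t - N t * q' t) / (2 * √(q t)) := by
    field_simp
    rw [Real.sq_sqrt (hpos t).le]
    ring
  rw [hnum]
  have := sub_nonneg.2 (h t)
  positivity

section GB2

variable {a b c d : ℝ}

def cubicGB2 (a b c d : ℝ) (u : EuclideanSpace ℝ (Fin 2)) : EuclideanSpace ℝ (Fin 2) :=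
  WithLp.toLp 2 ![(a * u 0 ^ 2 + b * u 1 ^ 2) * u 0, (c * u 0 ^ 2 + d * u 1 ^ 2) * u 1]

def cubicJacobianForm (a b c d : ℝ) (p w : EuclideanSpace ℝ (Fin 2)) : ℝ :=
  ((3 * a * p 0 ^ 2 + b * p 1 ^ 2) * w 0 + 2 * b * p 0 * p 1 * w 1) * w 0 +
    (2 * c * p 0 * p 1 * w 0 + (c * p 0 ^ 2 + 3 * d * p 1 ^ 2) * w 1) * w 1

-- at `u = 0` both sides vanish, since `‖0‖⁻¹ = 0`
theorem GB2_eq_smul (u : EuclideanSpace ℝ (Fin 2)) :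
    GB2 a b c d u = ‖u‖⁻¹ • cubicGB2 a b c d u := by
  rw [GB2, cubicGB2]
  split_ifs with hu
  · simp [hu]
  · rfl

theorem real_inner_fin_two (u w : EuclideanSpace ℝ (Fin 2)) :
    ⟪u, w⟫ = u 0 * w 0 + u 1 * w 1 := by
  simp [PiLp.inner_apply, Fin.sum_univ_two]
  ring

theorem inner_cubicGB2 (u w : EuclideanSpace ℝ (Fin 2)) :
    ⟪cubicGB2 a b c d u, w⟫ =
      (a * u 0 ^ 2 + b * u 1 ^ 2) * u 0 * w 0 + (c * u 0 ^ 2 + d * u 1 ^ 2) * u 1 * w 1 := by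
  simp [real_inner_fin_two, cubicGB2]

theorem cubicGB2_smul (s : ℝ) (u : EuclideanSpace ℝ (Fin 2)) :
    cubicGB2 a b c d (s • u) = s ^ 3 • cubicGB2 a b c d u := by
  ext i
  fin_cases i <;> simp [cubicGB2] <;> ring

theorem GB2_smul (s : ℝ) (u : EuclideanSpace ℝ (Fin 2)) :
    GB2 a b c d (s • u) = (s * |s|) • GB2 a b c d u := by
  rw [GB2_eq_smul, GB2_eq_smul, cubicGB2_smul, smul_smul, smul_smul, norm_smul, Real.norm_eq_abs]
  congr 1
  rcases eq_or_ne s 0 with rfl | hs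
  · simp
  · have hs' : |s| ≠ 0 := abs_ne_zero.2 hs
    field_simp
    rw [sq_abs]

theorem inner_GB2_self_nonneg (ha : 0 ≤ a) (hb : 0 ≤ b) (hc : 0 ≤ c) (hd : 0 ≤ d)
    (u : EuclideanSpace ℝ (Fin 2)) : 0 ≤ ⟪GB2 a b c d u, u⟫ := by
  rw [GB2_eq_smul, real_inner_smul_left, inner_cubicGB2]
  have h : (a * u 0 ^ 2 + b * u 1 ^ 2) * u 0 * u 0 + (c * u 0 ^ 2 + d * u 1 ^ 2) * u 1 * u 1 =
      a * u 0 ^ 4 + (b + c) * (u 0 * u 1) ^ 2 + d * u 1 ^ 4 := by ring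
  rw [h]
  positivity

theorem monotone_inner_GB2_smul (ha : 0 ≤ a) (hb : 0 ≤ b) (hc : 0 ≤ c) (hd : 0 ≤ d)
    (w : EuclideanSpace ℝ (Fin 2)) : Monotone fun t : ℝ => ⟪GB2 a b c d (t • w), w⟫ := by
  intro s t hst
  simp only [GB2_smul, real_inner_smul_left]
  exact mul_le_mul_of_nonneg_right (monotone_mul_abs hst) (inner_GB2_self_nonneg ha hb hc hd w)

theorem hasDerivAt_inner_cubicGB2_line (v w : EuclideanSpace ℝ (Fin 2)) (t : ℝ) :
    HasDerivAt (fun s : ℝ => ⟪cubicGB2 a b c d (v + s • w), w⟫)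
      (cubicJacobianForm a b c d (v + t • w) w) t := by
  have hx : HasDerivAt (fun s : ℝ => v 0 + s * w 0) (w 0) t := by
    simpa using (hasDerivAt_mul_const (w 0)).const_add (v 0)
  have hy : HasDerivAt (fun s : ℝ => v 1 + s * w 1) (w 1) t := by
    simpa using (hasDerivAt_mul_const (w 1)).const_add (v 1)
  refine ((((((hx.pow 2).const_mul a).add ((hy.pow 2).const_mul b)).mul hx).mul_const (w 0)).add
    (((((hx.pow 2).const_mul c).add ((hy.pow 2).const_mul d)).mul hy).mul_const (w 1))
    |>.congr_deriv ?_).congr_of_eventuallyEq (.of_forall fun s => ?_)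
  · simp [cubicJacobianForm]
    ring
  · simp [inner_cubicGB2]

theorem inner_cubicGB2_mul_inner_le (ha : 0 ≤ a) (hb : 0 ≤ b) (hc : 0 ≤ c) (hd : 0 ≤ d)
    (e₁ : (2 * b + c - a) ^ 2 ≤ 16 * (a * d)) (e₂ : (b + 2 * c - d) ^ 2 ≤ 16 * (a * d))
    (p w : EuclideanSpace ℝ (Fin 2)) :
    ⟪cubicGB2 a b c d p, w⟫ * ⟪p, w⟫ ≤ cubicJacobianForm a b c d p w * ‖p‖ ^ 2 := by
  rw [inner_cubicGB2, real_inner_fin_two, cubicJacobianForm, ← real_inner_self_eq_norm_sq,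
    real_inner_fin_two]
  set x := p 0
  set y := p 1
  have e₃ : (2 * b + c - a) * (b + 2 * c - d) ≤ 16 * (a * d) := by
    nlinarith [sq_nonneg ((2 * b + c - a) - (b + 2 * c - d))]
  have hdisc : (x * y * ((2 * b + c - a) * x ^ 2 + (b + 2 * c - d) * y ^ 2)) ^ 2 ≤
      4 * (2 * a * x ^ 4 + 3 * a * x ^ 2 * y ^ 2 + b * y ^ 4) *
        (c * x ^ 4 + 3 * d * x ^ 2 * y ^ 2 + 2 * d * y ^ 4) := by
    nlinarith [mul_nonneg (sub_nonneg.2 e₁) (by positivity : (0 : ℝ) ≤ x ^ 6 * y ^ 2),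
      mul_nonneg (sub_nonneg.2 e₂) (by positivity : (0 : ℝ) ≤ x ^ 2 * y ^ 6),
      mul_nonneg (sub_nonneg.2 e₃) (by positivity : (0 : ℝ) ≤ x ^ 4 * y ^ 4),
      (by positivity : (0 : ℝ) ≤ a * c * x ^ 8), (by positivity : (0 : ℝ) ≤ b * d * y ^ 8),
      (by positivity : (0 : ℝ) ≤ a * d * x ^ 6 * y ^ 2),
      (by positivity : (0 : ℝ) ≤ a * c * x ^ 6 * y ^ 2),
      (by positivity : (0 : ℝ) ≤ a * d * x ^ 4 * y ^ 4),
      (by positivity : (0 : ℝ) ≤ b * c * x ^ 4 * y ^ 4),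
      (by positivity : (0 : ℝ) ≤ a * d * x ^ 2 * y ^ 6),
      (by positivity : (0 : ℝ) ≤ b * d * x ^ 2 * y ^ 6)]
  have hform := quadratic_nonneg_of_sq_le (by positivity) (by positivity) hdisc (w 0) (w 1)
  linarith

theorem monotone_inner_GB2_line_of_ne_zero (ha : 0 ≤ a) (hb : 0 ≤ b) (hc : 0 ≤ c) (hd : 0 ≤ d)
    (e₁ : (2 * b + c - a) ^ 2 ≤ 16 * (a * d)) (e₂ : (b + 2 * c - d) ^ 2 ≤ 16 * (a * d))
    {v w : EuclideanSpace ℝ (Fin 2)} (h : ∀ t : ℝ, v + t • w ≠ 0) :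
    Monotone fun t : ℝ => ⟪GB2 a b c d (v + t • w), w⟫ := by
  have hquot : (fun t : ℝ => ⟪GB2 a b c d (v + t • w), w⟫) =
      fun t => ⟪cubicGB2 a b c d (v + t • w), w⟫ / √(‖v + t • w‖ ^ 2) := by
    ext t
    rw [GB2_eq_smul, real_inner_smul_left, Real.sqrt_sq (norm_nonneg _), inv_mul_eq_div]
  have hline : ∀ t : ℝ, HasDerivAt (fun s : ℝ => v + s • w) w t := fun t => by
    simpa using ((hasDerivAt_id t).smul_const w).const_add v
  rw [hquot]
  refine monotone_div_sqrt_of_deriv (hasDerivAt_inner_cubicGB2_line v w)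
    (fun t => (hline t).norm_sq) (fun t => by have := h t; positivity) fun t => ?_
  have := inner_cubicGB2_mul_inner_le ha hb hc hd e₁ e₂ (v + t • w) w
  linarith

theorem monotone_inner_GB2_line (ha : 0 ≤ a) (hb : 0 ≤ b) (hc : 0 ≤ c) (hd : 0 ≤ d)
    (e₁ : (2 * b + c - a) ^ 2 ≤ 16 * (a * d)) (e₂ : (b + 2 * c - d) ^ 2 ≤ 16 * (a * d))
    (v w : EuclideanSpace ℝ (Fin 2)) : Monotone fun t : ℝ => ⟪GB2 a b c d (v + t • w), w⟫ := by
  by_cases h : ∃ t₀ : ℝ, v + t₀ • w = 0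
  · obtain ⟨t₀, ht₀⟩ := h
    have hshift : ∀ t : ℝ, v + t • w = (t - t₀) • w := fun t => by
      rw [sub_smul, eq_neg_of_add_eq_zero_left ht₀]
      abel
    simp_rw [hshift]
    exact (monotone_inner_GB2_smul ha hb hc hd w).comp fun s t hst => sub_le_sub_right hst t₀
  · simp only [not_exists] at h
    exact monotone_inner_GB2_line_of_ne_zero ha hb hc hd e₁ e₂ h

theorem sq_le_of_maxmin_condition (had : 0 ≤ a * d)
    (h1 : max (a + c) (b + d) ≤ 2 * (b + c + 2 * √(a * d)))
    (h2 : 2 * (b + c - 2 * √(a * d)) ≤ min (a + c) (b + d)) :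
    (2 * b + c - a) ^ 2 ≤ 16 * (a * d) ∧ (b + 2 * c - d) ^ 2 ≤ 16 * (a * d) := by
  have hsq : (4 * √(a * d)) ^ 2 = 16 * (a * d) := by
    rw [mul_pow, Real.sq_sqrt had]
    norm_num
  rw [← hsq]
  obtain ⟨h1a, h1b⟩ := max_le_iff.1 h1
  obtain ⟨h2a, h2b⟩ := le_min_iff.1 h2
  exact ⟨sq_le_sq' (by linarith) (by linarith), sq_le_sq' (by linarith) (by linarith)⟩

end GB2

theorem GB2_monotone_of_maxmin_condition (a b c d : ℝ)
    (ha : 0 < a) (hb : 0 < b) (hc : 0 < c) (hd : 0 < d)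
    (h1 : max (a + c) (b + d) ≤ 2 * (b + c + 2 * Real.sqrt (a * d)))
    (h2 : 2 * (b + c - 2 * Real.sqrt (a * d)) ≤ min (a + c) (b + d)) :
    ∀ u v : EuclideanSpace ℝ (Fin 2),
      0 ≤ @inner ℝ _ _ (GB2 a b c d u - GB2 a b c d v) (u - v) := by
  obtain ⟨e₁, e₂⟩ := sq_le_of_maxmin_condition (by positivity) h1 h2
  intro u v
  have h := monotone_inner_GB2_line ha.le hb.le hc.le hd.le e₁ e₂ v (u - v) zero_le_one
  simp only [zero_smul, add_zero, one_smul, add_sub_cancel] at h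
  rwa [inner_sub_left, sub_nonneg]
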